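/- arXiv:math/9312204 — 2 statements merged into one kernel-verified Lean document; each statement's English description precedes it below -/
import Mathlib

section
/- For a filter F on ω, the following are equivalent: (1) F is hereditarily meager; (2) for each sequence ⟨X_i : i ∈ ω⟩ of subsets of ω such that ⋃_i X_i ∈ F⁺ and ω∖X_i ∈ F for every i, there exists a strictly increasing sequence n₀ < n₁ < ⋯ such that for every Y ∈ F and all but finitely many k, Y ∩ ⋃_{i ∈ [n_k, n_{k+1})} X_i ≠ ∅; (3) for each sequence ⟨X_i : i ∈ ω⟩ of subsets of ω such that ⋃_i X_i ∈ F, ⋃_{i<k} X_i ∉ F for every k, and only finitely many X_i belong to F⁺, there exists a strictly increasing sequence n₀ < n₁ < ⋯ such that for every Y ∈ F and all but finitely many k, Y ∩ ⋃_{i ∈ [n_k, n_{k+1})} X_i ≠ ∅. -/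
open Set Filter

/-- The characteristic function of a set, viewing `𝒫(α)` inside the Cantor space `α → Bool`. -/
noncomputable def chi {α : Type*} (X : Set α) : α → Bool :=
  fun n => @decide (n ∈ X) (Classical.propDecidable _)

/-- A family of subsets of `α` viewed as a subset of the Cantor space `α → Bool`. -/
noncomputable def toCantor {α : Type*} (A : Set (Set α)) : Set (α → Bool) := chi '' A

/-- A family of subsets of `α` is meager if it is meager as a subset of the Cantor space. -/
def MeagerFamily {α : Type*} (A : Set (Set α)) : Prop := IsMeagre (toCantor A)

/-- A family of subsets of `α` has the Baire property if, viewed in the Cantor space,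
it differs from an open set by a meager set. -/
def HasBP {α : Type*} (A : Set (Set α)) : Prop :=
  ∃ U : Set (α → Bool), IsOpen U ∧ IsMeagre (symmDiff (toCantor A) U)

/-- `A` has the Baire property relative to `C ⊆ 2^α`: the trace of `A` on `C` differs from a
relatively open subset of `C` by a set meager in `C`. -/
def RelBP {α : Type*} (A : Set (Set α)) (C : Set (α → Bool)) : Prop :=
  ∃ O : Set C, IsOpen O ∧ IsMeagre (symmDiff (Subtype.val ⁻¹' (toCantor A)) O)

/-- Talagrand's strong Baire property: the filter has the Baire property relative to
every closed subset of the Cantor space. -/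
def StrongBP {α : Type*} (F : Filter α) : Prop :=
  ∀ C : Set (α → Bool), IsClosed C → RelBP F.sets C

/-- `F⁺`: the sets whose complement is not in `F`, i.e. the sets compatible with `F`. -/
def Fplus {α : Type*} (F : Filter α) : Set (Set α) := {X | Xᶜ ∉ F}

/-- `F` is completely meager if for every `X ∈ F⁺` the filter generated by `F ∪ {X}` is meager. -/
def CompletelyMeager {α : Type*} (F : Filter α) : Prop :=
  ∀ X ∈ Fplus F, MeagerFamily (F ⊓ 𝓟 X).sets

/-- `F` is weakly hereditarily meager if for every `f`, either some fiber `f⁻¹(i)` is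
compatible with `F`, or the image filter `f(F)` is meager. -/
def WeaklyHereditarilyMeager {α : Type*} (F : Filter α) : Prop :=
  ∀ f : α → ℕ, (∃ i : ℕ, f ⁻¹' {i} ∈ Fplus F) ∨ MeagerFamily (Filter.map f F).sets

/-- `F` is hereditarily meager if for every `f`, the image filter `f(F)` either contains
a finite set (is improper) or is meager. -/
def HereditarilyMeager {α : Type*} (F : Filter α) : Prop :=
  ∀ f : α → ℕ, (∃ Y ∈ Filter.map f F, Y.Finite) ∨ MeagerFamily (Filter.map f F).sets

/-- `F` is a P⁺-filter: every ⊆*-decreasing sequence from `F⁺` has a pseudo-intersection in `F⁺`. -/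
def PPlusFilter {α : Type*} (F : Filter α) : Prop :=
  ∀ X : ℕ → Set α, (∀ n, X n ∈ Fplus F) → (∀ n, (X (n + 1) \ X n).Finite) →
    ∃ Y ∈ Fplus F, ∀ n, (Y \ X n).Finite

/-- `F` is a strong P⁺-filter: for every sequence from `F⁺` there is `f : ω → ω` such that
every `Y ∈ F` meets `Xₙ ∩ [0, f(n))` for all but finitely many `n`. -/
def StrongPPlusFilter (F : Filter ℕ) : Prop :=
  ∀ X : ℕ → Set ℕ, (∀ n, X n ∈ Fplus F) →
    ∃ f : ℕ → ℕ, ∀ Y ∈ F, ∀ᶠ n in Filter.atTop, (Y ∩ X n ∩ Set.Iio (f n)).Nonempty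

/-- `F` is an Fσ filter: as a subset of Cantor space it is a countable union of closed sets. -/
def IsFsigmaFilter (F : Filter ℕ) : Prop :=
  ∃ C : ℕ → Set (ℕ → Bool), (∀ n, IsClosed (C n)) ∧ toCantor F.sets = ⋃ n, C n

/-- An almost disjoint family: an infinite family of infinite sets with pairwise finite
intersections. -/
def ADFamily (𝒜 : Set (Set ℕ)) : Prop :=
  𝒜.Infinite ∧ (∀ A ∈ 𝒜, A.Infinite) ∧
    ∀ A ∈ 𝒜, ∀ B ∈ 𝒜, A ≠ B → (A ∩ B).Finite

/-- A maximal almost disjoint family. -/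
def MadFamily (𝒜 : Set (Set ℕ)) : Prop :=
  ADFamily 𝒜 ∧ ∀ X : Set ℕ, X.Infinite → ∃ A ∈ 𝒜, (X ∩ A).Infinite

/-- `F(𝒜)`: the filter generated by the complements of members of `𝒜` and the cofinite sets. -/
def madFilter (𝒜 : Set (Set ℕ)) : Filter ℕ :=
  Filter.cofinite ⊓ ⨅ A ∈ 𝒜, 𝓟 Aᶜ

/-- `I(𝒜)`: the ideal generated by `𝒜`, i.e. sets covered by finitely many members of `𝒜`
together with a finite set. -/
def madIdeal (𝒜 : Set (Set ℕ)) : Set (Set ℕ) :=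
  {X | ∃ s : Finset (Set ℕ), ↑s ⊆ 𝒜 ∧ (X \ ⋃ A ∈ s, (A : Set ℕ)).Finite}

/-- The Fubini product `F ⊗ G` of two filters. -/
def tensor {α β : Type*} (F : Filter α) (G : Filter β) : Filter (α × β) where
  sets := {X | {n | {m | (n, m) ∈ X} ∈ G} ∈ F}
  univ_sets := by simp
  sets_of_superset := by
    intro X Y hX hXY
    simp only [Set.mem_setOf_eq] at *
    filter_upwards [hX] with n hn
    filter_upwards [hn] with m hm
    exact hXY hm
  inter_sets := by
    intro X Y hX hY
    simp only [Set.mem_setOf_eq] at *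
    filter_upwards [hX, hY] with n h1 h2
    filter_upwards [h1, h2] with m hm1 hm2
    exact ⟨hm1, hm2⟩

/-- A dominating family of functions. -/
def Dominating (D : Set (ℕ → ℕ)) : Prop :=
  ∀ g : ℕ → ℕ, ∃ f ∈ D, ∀ᶠ n in Filter.atTop, g n ≤ f n

/-- The dominating number `𝔡`. -/
noncomputable def frakD : Cardinal :=
  sInf {c : Cardinal | ∃ D : Set (ℕ → ℕ), Dominating D ∧ Cardinal.mk D = c}

/-!
The tool is Talagrand's characterization: a filter `G` on `ℕ` is meager iff for some interval
partition `[n k, n (k + 1))` of `ℕ` every member of `G` meets almost all intervals.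
For (1 → 2) apply it to the image of `F` under `m ↦ min {i | m ∈ X i}`, which has no finite member
because `⋃ i, X i` is `F`-positive. (2 → 3) discards the finitely many `F`-positive `X i`.
For (3 → 1), given `f`, either infinitely many fibres `f⁻¹{i}` are `F`-positive, and every member
of `f(F)` contains them all, or the fibres themselves satisfy the hypotheses of (3).
-/

open PiNat

lemma IsNowhereDense.union {X : Type*} [TopologicalSpace X] {s t : Set X}
    (hs : IsNowhereDense s) (ht : IsNowhereDense t) : IsNowhereDense (s ∪ t) := by
  rw [IsNowhereDense, interior_eq_empty_iff_dense_compl] at *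
  rw [closure_union, compl_union]
  exact hs.inter_of_isOpen_left ht isClosed_closure.isOpen_compl

lemma IsMeagre.exists_seq_isNowhereDense {X : Type*} [TopologicalSpace X] {s : Set X}
    (hs : IsMeagre s) : ∃ D : ℕ → Set X, (∀ m, IsNowhereDense (D m)) ∧ s ⊆ ⋃ m, D m := by
  obtain ⟨S, hS, hcount, hsub⟩ := isMeagre_iff_countable_union_isNowhereDense.1 hs
  obtain ⟨D, hD⟩ := (hcount.insert ∅).exists_eq_range (insert_nonempty _ _)
  refine ⟨D, fun m => ?_, hsub.trans ?_⟩
  · rcases (hD ▸ mem_range_self m : D m ∈ insert ∅ S) with h | h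
    · simp [h]
    · exact hS _ h
  · rw [← sUnion_range, ← hD]
    exact sUnion_mono (subset_insert _ _)

lemma IsMeagre.exists_monotone_isClosed_isNowhereDense {X : Type*} [TopologicalSpace X]
    {s : Set X} (hs : IsMeagre s) : ∃ C : ℕ → Set X, Monotone C ∧ (∀ m, IsClosed (C m)) ∧
      (∀ m, IsNowhereDense (C m)) ∧ s ⊆ ⋃ m, C m := by
  obtain ⟨D, hD, hsub⟩ := hs.exists_seq_isNowhereDense
  have hacc : ∀ m, IsNowhereDense (accumulate D m) := by
    intro m
    induction m with
    | zero => simpa using hD 0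
    | succ m ih => simpa using ih.union (hD (m + 1))
  refine ⟨fun m => closure (accumulate D m), fun _ _ h => closure_mono (monotone_accumulate h),
    fun _ => isClosed_closure, fun m => (hacc m).closure, hsub.trans ?_⟩
  rw [← iUnion_accumulate]
  exact iUnion_mono fun _ => subset_closure

lemma exists_cylinder_subset {U : Set (ℕ → Bool)} (hU : IsOpen U) {x : ℕ → Bool} (hx : x ∈ U) :
    ∃ q, cylinder x q ⊆ U := by
  obtain ⟨q, hq⟩ := exists_disjoint_cylinder hU.isClosed_compl (not_not_intro hx)
  exact ⟨q, disjoint_compl_left_iff_subset.1 hq⟩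

lemma IsClosed.exists_cylinder_disjoint {C : Set (ℕ → Bool)} (hC : IsClosed C)
    (hC' : IsNowhereDense C) (x : ℕ → Bool) (p : ℕ) :
    ∃ u ∈ cylinder x p, ∃ q, Disjoint C (cylinder u q) := by
  have hdense : Dense Cᶜ := interior_eq_empty_iff_dense_compl.1 (hC.isNowhereDense_iff.1 hC')
  obtain ⟨u, hu, huC⟩ :=
    hdense.inter_open_nonempty _ (isOpen_cylinder _ x p) ⟨x, self_mem_cylinder x p⟩
  exact ⟨u, hu, exists_disjoint_cylinder hC huC⟩

/- Only the finitely many restrictions `x ↾ p` matter, so the escape length can be chosen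
uniformly in `x`. -/
lemma IsClosed.exists_forall_cylinder_disjoint {C : Set (ℕ → Bool)} (hC : IsClosed C)
    (hC' : IsNowhereDense C) (p : ℕ) :
    ∃ q, p < q ∧ ∀ x : ℕ → Bool, ∃ u ∈ cylinder x p, Disjoint C (cylinder u q) := by
  let extend (s : Fin p → Bool) : ℕ → Bool := fun i => if h : i < p then s ⟨i, h⟩ else false
  choose u hu q hq using fun s => hC.exists_cylinder_disjoint hC' (extend s) p
  obtain ⟨b, hb⟩ := (finite_range q).bddAbove
  refine ⟨max b (p + 1), by omega, fun x => ⟨u fun i => x i, ?_, ?_⟩⟩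
  · intro i hi
    simp [hu _ i hi, extend, hi]
  · exact (hq _).mono_right (cylinder_anti _ ((hb (mem_range_self _)).trans (le_max_left _ _)))

lemma exists_strictMono_forall_cylinder_disjoint {C : ℕ → Set (ℕ → Bool)}
    (hC : ∀ m, IsClosed (C m)) (hC' : ∀ m, IsNowhereDense (C m)) :
    ∃ N : ℕ → ℕ, StrictMono N ∧
      ∀ k (x : ℕ → Bool), ∃ u ∈ cylinder x (N k), Disjoint (C k) (cylinder u (N (k + 1))) := by
  choose Q hQ hQC using fun k => (hC k).exists_forall_cylinder_disjoint (hC' k)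
  let N : ℕ → ℕ := fun k => Nat.rec 0 Q k
  exact ⟨N, strictMono_nat_of_lt_succ fun k => hQ k (N k), fun k => hQC k (N k)⟩

lemma isClosed_setOf_forall_exists_Ico (n : ℕ → ℕ) (m : ℕ) :
    IsClosed {x : ℕ → Bool | ∀ k ≥ m, ∃ i ∈ Ico (n k) (n (k + 1)), x i = true} := by
  have : {x : ℕ → Bool | ∀ k ≥ m, ∃ i ∈ Ico (n k) (n (k + 1)), x i = true} =
      ⋂ k ≥ m, ⋃ i ∈ Ico (n k) (n (k + 1)), {x | x i = true} := by
    ext; simp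
  rw [this]
  exact isClosed_biInter fun k _ => (finite_Ico _ _).isClosed_biUnion
    fun i _ => isClosed_eq (continuous_apply i) continuous_const

lemma isNowhereDense_setOf_forall_exists_Ico {n : ℕ → ℕ} (hn : StrictMono n) (m : ℕ) :
    IsNowhereDense {x : ℕ → Bool | ∀ k ≥ m, ∃ i ∈ Ico (n k) (n (k + 1)), x i = true} := by
  rw [(isClosed_setOf_forall_exists_Ico n m).isNowhereDense_iff, eq_empty_iff_forall_notMem]
  intro x hx
  obtain ⟨q, hq⟩ := exists_cylinder_subset isOpen_interior hx
  let y : ℕ → Bool := fun i => if i < q then x i else false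
  have hy : y ∈ cylinder x q := fun i hi => if_pos hi
  obtain ⟨i, hi, hyi⟩ := interior_subset (hq hy) (max m q) (le_max_left _ _)
  have : q ≤ i := (le_max_right m q).trans ((hn.id_le _).trans hi.1)
  simp [y, not_lt.2 this] at hyi

lemma meagerFamily_of_eventually_inter_Ico_nonempty {A : Set (Set ℕ)} {n : ℕ → ℕ}
    (hn : StrictMono n) (h : ∀ Y ∈ A, ∀ᶠ k in atTop, (Y ∩ Ico (n k) (n (k + 1))).Nonempty) :
    MeagerFamily A := by
  refine isMeagre_iff_countable_union_isNowhereDense.2 ⟨_, forall_mem_range.2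
    (isNowhereDense_setOf_forall_exists_Ico hn), countable_range _, ?_⟩
  rintro _ ⟨Y, hY, rfl⟩
  obtain ⟨m, hm⟩ := eventually_atTop.1 (h Y hY)
  refine mem_sUnion_of_mem (fun k hk => ?_) (mem_range_self m)
  obtain ⟨i, hiY, hi⟩ := hm k hk
  exact ⟨i, hi, by simp [chi, hiY]⟩

/- Filling the blocks indexed by `K` from `w` is continuous in `w`, so if every filling landed in
`⋃ m, C m`, by Baire some `C m` would contain the fillings of all `w` in a cylinder; escaping
from `C k ⊇ C m` on a block `k ∈ K` beyond that cylinder gives a contradiction. -/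
open Classical in
lemma exists_forall_fill_notMem {C : ℕ → Set (ℕ → Bool)} (hCmono : Monotone C)
    (hC : ∀ m, IsClosed (C m)) {N : ℕ → ℕ} (hN : StrictMono N)
    (hNC : ∀ k (x : ℕ → Bool), ∃ u ∈ cylinder x (N k), Disjoint (C k) (cylinder u (N (k + 1))))
    {K : Set ℕ} (hK : ∀ a, ∃ k ≥ a, k ∈ K) (y : ℕ → Bool) :
    ∃ w : ℕ → Bool, ∀ m,
      (fun j => if j ∈ ⋃ k ∈ K, Ico (N k) (N (k + 1)) then w j else y j) ∉ C m := by
  set P := ⋃ k ∈ K, Ico (N k) (N (k + 1))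
  set fill : (ℕ → Bool) → ℕ → Bool := fun w j => if j ∈ P then w j else y j
  by_contra! hcover
  have hfill_cont : Continuous fill := continuous_pi fun j => by
    by_cases hj : j ∈ P
    · simpa only [fill, if_pos hj] using continuous_apply j
    · simpa only [fill, if_neg hj] using continuous_const
  obtain ⟨m, w₀, hw₀⟩ := nonempty_interior_of_iUnion_of_closed
    (fun m => (hC m).preimage hfill_cont) (eq_univ_of_forall fun w => mem_iUnion.2 (hcover w))
  obtain ⟨q, hq⟩ := exists_cylinder_subset isOpen_interior hw₀
  obtain ⟨k, hk, hkK⟩ := hK (max m q)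
  obtain ⟨u, hu, hdisj⟩ := hNC k (fill w₀)
  let w : ℕ → Bool := fun j => if j < N k then w₀ j else u j
  have hwC : fill w ∈ C k := by
    have hw : w ∈ cylinder w₀ q := fun j hj =>
      if_pos (hj.trans_le ((le_of_max_le_right hk).trans (hN.id_le k)))
    have : w ∈ fill ⁻¹' C m := interior_subset (hq hw)
    exact hCmono (le_of_max_le_left hk) this
  have hwu : fill w ∈ cylinder u (N (k + 1)) := by
    intro j hj
    by_cases hjk : j < N k
    · rw [hu j hjk]
      simp only [fill, w, if_pos hjk]
    · have hjP : j ∈ P := mem_biUnion hkK ⟨not_lt.1 hjk, hj⟩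
      simp only [fill, w, if_pos hjP, if_neg hjk]
  exact hdisj.ne_of_mem hwC hwu rfl

lemma MeagerFamily.exists_strictMono_eventually_inter_Ico_nonempty {G : Filter ℕ}
    (hG : MeagerFamily G.sets) : ∃ n : ℕ → ℕ, StrictMono n ∧
      ∀ Y ∈ G, ∀ᶠ k in atTop, (Y ∩ Ico (n k) (n (k + 1))).Nonempty := by
  classical
  obtain ⟨C, hCmono, hCclosed, hCnd, hcover⟩ := IsMeagre.exists_monotone_isClosed_isNowhereDense hG
  obtain ⟨N, hN, hNC⟩ := exists_strictMono_forall_cylinder_disjoint hCclosed hCnd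
  refine ⟨N, hN, fun Y hY => ?_⟩
  by_contra hmiss
  let K := {k | Y ∩ Ico (N k) (N (k + 1)) = ∅}
  have hK : ∀ a, ∃ k ≥ a, k ∈ K := by
    simpa [K, not_nonempty_iff_eq_empty] using frequently_atTop.1 (not_eventually.1 hmiss)
  obtain ⟨w, hw⟩ := exists_forall_fill_notMem hCmono hCclosed hN hNC hK (chi Y)
  set P := ⋃ k ∈ K, Ico (N k) (N (k + 1))
  set Z : ℕ → Bool := fun j => if j ∈ P then w j else chi Y j
  have hYZ : Y ⊆ {j | Z j = true} := by
    intro j hj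
    have hjP : j ∉ P := by
      simp only [P, mem_iUnion₂, not_exists]
      exact fun k hk hjk => eq_empty_iff_forall_notMem.1 hk j ⟨hj, hjk⟩
    simp [Z, hjP, chi, hj]
  have hZ : Z ∈ toCantor G.sets := ⟨_, mem_of_superset hY hYZ, by ext; simp [chi]⟩
  obtain ⟨m, hm⟩ := mem_iUnion.1 (hcover hZ)
  exact hw m hm

theorem meagerFamily_sets_iff {G : Filter ℕ} : MeagerFamily G.sets ↔ ∃ n : ℕ → ℕ, StrictMono n ∧
    ∀ Y ∈ G, ∀ᶠ k in atTop, (Y ∩ Ico (n k) (n (k + 1))).Nonempty :=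
  ⟨MeagerFamily.exists_strictMono_eventually_inter_Ico_nonempty,
    fun ⟨_, hn, h⟩ => meagerFamily_of_eventually_inter_Ico_nonempty hn h⟩

def IsHittingPartition (F : Filter ℕ) (X : ℕ → Set ℕ) (n : ℕ → ℕ) : Prop :=
  StrictMono n ∧ ∀ Y ∈ F, ∀ᶠ k in atTop, (Y ∩ ⋃ i ∈ Ico (n k) (n (k + 1)), X i).Nonempty

lemma IsHittingPartition.mono {F : Filter ℕ} {X X' : ℕ → Set ℕ} {n : ℕ → ℕ}
    (h : IsHittingPartition F X n) (hXX' : ∀ i, X i ⊆ X' i) : IsHittingPartition F X' n :=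
  ⟨h.1, fun Y hY => (h.2 Y hY).mono fun _ => Nonempty.mono <|
    inter_subset_inter_right _ <| biUnion_mono subset_rfl fun i _ => hXX' i⟩

lemma HereditarilyMeager.exists_isHittingPartition {F : Filter ℕ} (h : HereditarilyMeager F)
    {X : ℕ → Set ℕ} (hU : (⋃ i, X i) ∈ Fplus F) (hX : ∀ i, (X i)ᶜ ∈ F) :
    ∃ n, IsHittingPartition F X n := by
  let f : ℕ → ℕ := fun m => sInf {i | m ∈ X i}
  have hf : ∀ m ∈ ⋃ i, X i, m ∈ X (f m) := fun m hm => Nat.sInf_mem (mem_iUnion.1 hm)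
  have hinfinite : ¬ ∃ Y ∈ map f F, Y.Finite := by
    rintro ⟨Y, hY, hYfin⟩
    apply hU
    filter_upwards [hY, (biInter_mem hYfin).2 fun i _ => hX i] with m hmY hmX hmU
    exact mem_iInter₂.1 hmX (f m) hmY (hf m hmU)
  obtain ⟨n, hn, hhit⟩ := meagerFamily_sets_iff.1 ((h f).resolve_left hinfinite)
  refine ⟨n, hn, fun Y hY => ?_⟩
  filter_upwards [hhit _ (image_mem_map hY), eventually_ge_atTop 1]
    with k ⟨_, ⟨m, hmY, rfl⟩, hm⟩ hk
  have hfm : 0 < f m := (hn.le_apply.trans (hn.monotone hk)).trans hm.1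
  have hmU : m ∈ ⋃ i, X i := mem_iUnion.2 (Nat.nonempty_of_pos_sInf hfm)
  exact ⟨m, hmY, mem_biUnion hm (hf m hmU)⟩

lemma exists_isHittingPartition_of_finite_fplus {F : Filter ℕ}
    (h : ∀ X : ℕ → Set ℕ, (⋃ i, X i) ∈ Fplus F → (∀ i, (X i)ᶜ ∈ F) →
      ∃ n, IsHittingPartition F X n)
    {X : ℕ → Set ℕ} (hU : (⋃ i, X i) ∈ F) (hX : ∀ k, (⋃ i ∈ Iio k, X i) ∉ F)
    (hfin : {i | X i ∈ Fplus F}.Finite) : ∃ n, IsHittingPartition F X n := by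
  classical
  obtain ⟨b, hb⟩ := hfin.bddAbove
  let X' : ℕ → Set ℕ := fun i => if b < i then X i else ∅
  have hX' : ∀ i, (X' i)ᶜ ∈ F := by
    intro i
    by_cases hi : b < i
    · have : X i ∉ Fplus F := fun hi' => (hb hi').not_gt hi
      rw [show X' i = X i from if_pos hi]
      exact not_not.1 this
    · rw [show X' i = ∅ from if_neg hi, compl_empty]
      exact univ_mem
  have hU' : (⋃ i, X' i) ∈ Fplus F := by
    refine fun hc => hX (b + 1) (mem_of_superset (inter_mem hU hc) ?_)
    rintro m ⟨hm, hm'⟩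
    obtain ⟨i, hi⟩ := mem_iUnion.1 hm
    have : ¬ b < i := fun hbi => hm' (mem_iUnion_of_mem i (by simpa [X', hbi] using hi))
    exact mem_biUnion (show i < b + 1 by omega) hi
  obtain ⟨n, hn⟩ := h X' hU' hX'
  exact ⟨n, hn.mono fun i => by by_cases hi : b < i <;> simp [X', hi]⟩

lemma HereditarilyMeager.of_exists_isHittingPartition {F : Filter ℕ}
    (h : ∀ X : ℕ → Set ℕ, (⋃ i, X i) ∈ F → (∀ k, (⋃ i ∈ Iio k, X i) ∉ F) →
      {i | X i ∈ Fplus F}.Finite → ∃ n, IsHittingPartition F X n) :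
    HereditarilyMeager F := by
  intro f
  refine or_iff_not_imp_left.2 fun hinfinite => meagerFamily_sets_iff.2 ?_
  by_cases hP : {i | f ⁻¹' {i} ∈ Fplus F}.Finite
  · have hU : (⋃ i, f ⁻¹' {i}) ∈ F := mem_of_superset univ_mem fun m _ => mem_iUnion.2 ⟨f m, rfl⟩
    have hX : ∀ k, (⋃ i ∈ Iio k, f ⁻¹' {i}) ∉ F := fun k hk => by
      have : (⋃ i ∈ Iio k, f ⁻¹' {i}) = f ⁻¹' Iio k := by ext; simp
      exact hinfinite ⟨Iio k, mem_map.2 (this ▸ hk), finite_Iio k⟩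
    obtain ⟨n, hn, hhit⟩ := h (fun i => f ⁻¹' {i}) hU hX hP
    refine ⟨n, hn, fun Y hY => (hhit _ hY).mono ?_⟩
    rintro k ⟨m, hmY, hm⟩
    obtain ⟨i, hi, rfl⟩ := mem_iUnion₂.1 hm
    exact ⟨f m, hmY, hi⟩
  · have hPY : ∀ Y ∈ map f F, ∀ i, f ⁻¹' {i} ∈ Fplus F → i ∈ Y := fun Y hY i hi => by
      by_contra hiY
      exact hi (mem_of_superset hY fun m hm hmi => hiY (hmi ▸ hm))
    refine ⟨Nat.nth _, Nat.nth_strictMono hP, fun Y hY => Eventually.of_forall fun k =>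
      ⟨_, hPY Y hY _ (Nat.nth_mem_of_infinite hP k), ?_⟩⟩
    exact left_mem_Ico.2 (Nat.nth_strictMono hP k.lt_succ_self)

theorem stmt3_general (F : Filter ℕ) :
    List.TFAE [HereditarilyMeager F,
      ∀ X : ℕ → Set ℕ, (⋃ i, X i) ∈ Fplus F → (∀ i, (X i)ᶜ ∈ F) →
        ∃ n : ℕ → ℕ, StrictMono n ∧
          ∀ Y ∈ F, ∀ᶠ k in Filter.atTop,
            (Y ∩ ⋃ i ∈ Set.Ico (n k) (n (k + 1)), X i).Nonempty,
      ∀ X : ℕ → Set ℕ, (⋃ i, X i) ∈ F → (∀ k, (⋃ i ∈ Set.Iio k, X i) ∉ F) →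
        {i | X i ∈ Fplus F}.Finite →
        ∃ n : ℕ → ℕ, StrictMono n ∧
          ∀ Y ∈ F, ∀ᶠ k in Filter.atTop,
            (Y ∩ ⋃ i ∈ Set.Ico (n k) (n (k + 1)), X i).Nonempty] := by
  tfae_have 1 → 2 := fun h _ => h.exists_isHittingPartition
  tfae_have 2 → 3 := fun h _ => exists_isHittingPartition_of_finite_fplus h
  tfae_have 3 → 1 := HereditarilyMeager.of_exists_isHittingPartition
  tfae_finish

/-- Characterizations of hereditarily meager filters. -/
theorem stmt3 (F : Filter ℕ) (hF : Filter.cofinite ≤ F) :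
    List.TFAE [HereditarilyMeager F,
      ∀ X : ℕ → Set ℕ, (⋃ i, X i) ∈ Fplus F → (∀ i, (X i)ᶜ ∈ F) →
        ∃ n : ℕ → ℕ, StrictMono n ∧
          ∀ Y ∈ F, ∀ᶠ k in Filter.atTop,
            (Y ∩ ⋃ i ∈ Set.Ico (n k) (n (k + 1)), X i).Nonempty,
      ∀ X : ℕ → Set ℕ, (⋃ i, X i) ∈ F → (∀ k, (⋃ i ∈ Set.Iio k, X i) ∉ F) →
        {i | X i ∈ Fplus F}.Finite →
        ∃ n : ℕ → ℕ, StrictMono n ∧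
          ∀ Y ∈ F, ∀ᶠ k in Filter.atTop,
            (Y ∩ ⋃ i ∈ Set.Ico (n k) (n (k + 1)), X i).Nonempty] :=
  stmt3_general F
end

section
/- Assume the continuum hypothesis. Then there exists a mad family 𝒜 on ω such that the filter F(𝒜) is a strong P⁺-filter. -/
open Set Filter

/-!
Assuming CH, enumerate in type `ω₁` all sets `Z ⊆ ω` and all sequences `(Xₙ)`, and build `𝒜` as
the union of an increasing `ω₁`-chain of countable almost disjoint families. When `Z` is handled
and is not covered, up to a finite set, by finitely many current members, an infinite `A ⊆ Z`
almost disjoint from them is added; this makes `𝒜` maximal. When `(Xₙ)` is handled and every `Xₙ`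
is positive, we commit to finite blocks `Bₙ ⊆ Xₙ ∖ n` such that the number of points of `Bₙ`
outside any finitely many current members tends to infinity, and from then on every new member is
chosen to meet almost every block in at most one point. A set in `F(𝒜)` excludes only finitely
many members: the old ones leave many points of `Bₙ`, and each new one removes at most one, so
the set meets `Bₙ` for almost all `n`, and `f(n) = max Bₙ + 1` works.
-/

open scoped Finset

/-- Transfinite recursion along `I`: stage `i` extends the join of `x₀` and the earlier stages so
as to fulfil `Q i`. -/
theorem exists_isChain_forall_of_countable_Iio {I α : Type*} [LinearOrder I] [WellFoundedLT I]
    [CompleteLattice α] (hI : ∀ i : I, (Iio i).Countable) (P : α → Prop) (Q : I → α → Prop)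
    (x₀ : α)
    (hsup : ∀ s : Set α, s.Countable → IsChain (· ≤ ·) s → (∀ x ∈ s, P x) → P (x₀ ⊔ sSup s))
    (hstep : ∀ i x, P x → ∃ y, x ≤ y ∧ P y ∧ Q i y) :
    ∃ c : Set α, IsChain (· ≤ ·) c ∧ (∀ x ∈ c, P x) ∧ ∀ i, ∃ x ∈ c, Q i x := by
  have hstep' (i : I) (x : α) : ∃ y, x ≤ y ∧ (P x → P y ∧ Q i y) := by
    by_cases hx : P x
    · obtain ⟨y, hxy, hy⟩ := hstep i x hx
      exact ⟨y, hxy, fun _ => hy⟩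
    · exact ⟨x, le_rfl, fun h => absurd h hx⟩
  choose next le_next hnext using hstep'
  let g : I → α := wellFounded_lt.fix fun i g => next i (x₀ ⊔ ⨆ j : Iio i, g j j.2)
  have hg (i : I) : g i = next i (x₀ ⊔ sSup (g '' Iio i)) := by
    rw [sSup_image']
    exact wellFounded_lt.fix_eq _ i
  have hmono : Monotone g := by
    refine fun i j hij => hij.eq_or_lt.elim (fun h => h ▸ le_rfl) fun hlt => ?_
    calc g i ≤ sSup (g '' Iio j) := le_sSup (mem_image_of_mem g hlt)
      _ ≤ x₀ ⊔ sSup (g '' Iio j) := le_sup_right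
      _ ≤ g j := hg j ▸ le_next _ _
  have hP (i : I) : P (x₀ ⊔ sSup (g '' Iio i)) ∧ P (g i) := by
    induction i using WellFoundedLT.induction with
    | _ i ih =>
      have hprev : P (x₀ ⊔ sSup (g '' Iio i)) :=
        hsup _ ((hI i).image g) (hmono.isChain_range.mono (image_subset_range _ _))
          (forall_mem_image.2 fun j hj => (ih j hj).2)
      exact ⟨hprev, hg i ▸ (hnext i _ hprev).1⟩
  exact ⟨range g, hmono.isChain_range, forall_mem_range.2 fun i => (hP i).2,
    fun i => ⟨g i, mem_range_self i, hg i ▸ (hnext i _ (hP i).1).2⟩⟩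

section OmegaOne

universe u

open Cardinal Ordinal

theorem countable_Iio_omega_one_toType (i : (ω₁ : Ordinal.{u}).ToType) : (Iio i).Countable := by
  rw [← le_aleph0_iff_set_countable, ← lt_aleph_one_iff]
  simpa using mk_Iio_lt i

theorem nonempty_omega_one_toType_equiv {α : Type u} (hα : #α = ℵ₁) :
    Nonempty ((ω₁ : Ordinal.{u}).ToType ≃ α) :=
  Cardinal.eq.1 (by simp [hα])

end OmegaOne

theorem Set.Countable.exists_finset_eventually_subset {α : Type*} {s : Set α}
    (hs : s.Countable) : ∃ F : ℕ → Finset α, (∀ k, ↑(F k) ⊆ s) ∧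
      ∀ t : Finset α, ↑t ⊆ s → ∀ᶠ k in atTop, t ⊆ F k := by
  classical
  rcases s.eq_empty_or_nonempty with rfl | hne
  · refine ⟨fun _ => ∅, fun _ => by simp, fun t ht => .of_forall fun _ => ?_⟩
    simpa [Finset.subset_empty, ← Finset.coe_eq_empty] using ht
  obtain ⟨e, rfl⟩ := hs.exists_eq_range hne
  refine ⟨fun k => (Finset.range k).image e, fun k => by simp, fun t ht => ?_⟩
  have : ∀ a ∈ t, ∀ᶠ k in atTop, a ∈ (Finset.range k).image e := fun a ha => by
    obtain ⟨i, rfl⟩ := ht ha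
    exact (eventually_gt_atTop i).mono fun k hk => Finset.mem_image_of_mem e (by simpa using hk)
  exact (eventually_all_finset t).2 this |>.mono fun k hk a ha => hk a ha

theorem Finset.exists_forall_notMem_of_card_lt {α : Type*} {T : Finset α} {s : Finset (Set α)}
    (hs : ∀ A ∈ s, (↑T ∩ A).Subsingleton) (h : #s < #T) : ∃ x ∈ T, ∀ A ∈ s, x ∉ A := by
  by_contra! hcov
  choose! f hf hxf using hcov
  refine h.not_ge (Finset.card_le_card_of_injOn f (fun x hx => hf x hx) fun x hx y hy hxy => ?_)
  exact hs (f x) (hf x hx) ⟨hx, hxf x hx⟩ ⟨hy, hxy ▸ hxf y hy⟩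

theorem exists_strictMono_forall_mem_notMem (D : ℕ → Set ℕ) (hD : ∀ t, (D t).Infinite)
    (W : ℕ → ℕ → Finset ℕ) :
    ∃ a : ℕ → ℕ, StrictMono a ∧ (∀ t, a t ∈ D t) ∧ ∀ t, a (t + 1) ∉ W (t + 1) (a t) := by
  have hnext (t p : ℕ) : ∃ x ∈ D t, p < x ∧ x ∉ W t p := by
    obtain ⟨x, hx, hpx⟩ := ((hD t).sdiff (W t p).finite_toSet).exists_gt p
    exact ⟨x, hx.1, hpx, hx.2⟩
  choose g hgD hgt hgW using hnext
  let a : ℕ → ℕ := fun t => Nat.rec (g 0 0) (fun t p => g (t + 1) p) t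
  refine ⟨a, strictMono_nat_of_lt_succ fun t => hgt (t + 1) (a t), fun t => ?_,
    fun t => hgW (t + 1) (a t)⟩
  cases t with
  | zero => exact hgD 0 0
  | succ t => exact hgD (t + 1) (a t)

theorem mem_madFilter_iff {𝒜 : Set (Set ℕ)} {Y : Set ℕ} :
    Y ∈ madFilter 𝒜 ↔ Yᶜ ∈ madIdeal 𝒜 := by
  simp only [madFilter, mem_inf_iff_superset, mem_biInf_principal, madIdeal, mem_cofinite]
  constructor
  · rintro ⟨t₁, ht₁, t₂, ⟨I, hI, hI𝒜, hIt⟩, hY⟩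
    refine ⟨hI.toFinset, fun A hA => hI𝒜 A (by simpa using hA),
      ht₁.subset fun x ⟨hxY, hxI⟩ hxt => hxY (hY ⟨hxt, hIt (by simpa using hxI)⟩)⟩
  · rintro ⟨s, hs, hfin⟩
    refine ⟨(Yᶜ \ ⋃ A ∈ s, A)ᶜ, by simpa using hfin, ⋂ A ∈ s, Aᶜ,
      ⟨s, s.finite_toSet, hs, subset_rfl⟩, fun x ⟨h₁, h₂⟩ => by_contra fun hxY => h₁ ⟨hxY, ?_⟩⟩
    simpa using h₂

theorem mem_fplus_madFilter_iff {𝒜 : Set (Set ℕ)} {X : Set ℕ} :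
    X ∈ Fplus (madFilter 𝒜) ↔ X ∉ madIdeal 𝒜 := by
  simp [Fplus, mem_madFilter_iff]

theorem madIdeal_mono {𝒜 𝒜' : Set (Set ℕ)} (h : 𝒜 ⊆ 𝒜') : madIdeal 𝒜 ⊆ madIdeal 𝒜' :=
  fun _ ⟨s, hs, hfin⟩ => ⟨s, hs.trans h, hfin⟩

theorem exists_inter_infinite_of_mem_madIdeal {𝒜 : Set (Set ℕ)} {Z : Set ℕ}
    (hZ : Z ∈ madIdeal 𝒜) (hinf : Z.Infinite) : ∃ A ∈ 𝒜, (Z ∩ A).Infinite := by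
  obtain ⟨s, hs, hfin⟩ := hZ
  by_contra! hall
  refine hinf ((hfin.union (s.finite_toSet.biUnion fun A hA => hall A (hs hA))).subset ?_)
  intro x hx
  by_cases hxs : x ∈ ⋃ A ∈ s, A
  · obtain ⟨A, hA, hxA⟩ := mem_iUnion₂.1 hxs
    exact Or.inr (mem_iUnion₂.2 ⟨A, hA, hx, hxA⟩)
  · exact Or.inl ⟨hx, hxs⟩

theorem exists_infinite_subset_almostDisjoint {𝒜 : Set (Set ℕ)} (h𝒜 : 𝒜.Countable) {Z : Set ℕ}
    (hZ : Z ∉ madIdeal 𝒜) {𝔅 : Set (ℕ → Finset ℕ)} (h𝔅 : 𝔅.Countable)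
    (h𝔅n : ∀ B ∈ 𝔅, ∀ n, ∀ x ∈ B n, n ≤ x) :
    ∃ A ⊆ Z, A.Infinite ∧ (∀ F ∈ 𝒜, (A ∩ F).Finite) ∧
      ∀ B ∈ 𝔅, ∀ᶠ n in atTop, (↑(B n) ∩ A).Subsingleton := by
  obtain ⟨F, hF𝒜, hF⟩ := h𝒜.exists_finset_eventually_subset
  obtain ⟨H, -, hH⟩ := h𝔅.exists_finset_eventually_subset
  -- `a t` avoids the members in `F t` and the blocks `B n`, `n ≤ a (t - 1)`, of each `B ∈ H t`;
  -- as `B n ⊆ [n, ∞)`, a late block containing `a t` cannot contain a later point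
  obtain ⟨a, ha, haD, haW⟩ := exists_strictMono_forall_mem_notMem (fun t => Z \ ⋃ A ∈ F t, A)
    (fun t => Set.not_finite.1 fun h => hZ ⟨F t, hF𝒜 t, h⟩)
    (fun t p => (H t).biUnion fun B => (Finset.range (p + 1)).biUnion B)
  refine ⟨range a, range_subset_iff.2 fun t => (haD t).1, infinite_range_of_injective ha.injective,
    fun A hA => ?_, fun B hB => ?_⟩
  · obtain ⟨T, hT⟩ := eventually_atTop.1 (hF {A} (by simpa using hA))
    refine ((finite_Iio T).image a).subset ?_
    rintro _ ⟨⟨t, rfl⟩, hAt⟩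
    exact mem_image_of_mem a (not_le.1 fun hTt =>
      (haD t).2 (mem_iUnion₂.2 ⟨A, hT t hTt (Finset.mem_singleton_self A), hAt⟩))
  · obtain ⟨T, hT⟩ := eventually_atTop.1 (hH {B} (by simpa using hB))
    have hlater (n t t' : ℕ) (hn : a T < n) (htt' : t < t') (ht : a t ∈ B n) : a t' ∉ B n := by
      obtain ⟨u, rfl⟩ : ∃ u, t' = u + 1 := ⟨t' - 1, by omega⟩
      have hnt : n ≤ a t := h𝔅n B hB n _ ht
      have hTt : T < t := ha.lt_iff_lt.1 (hn.trans_le hnt)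
      have htu : a t ≤ a u := ha.monotone (by omega)
      exact fun h => haW u (Finset.mem_biUnion.2 ⟨B, hT (u + 1) (by omega)
        (Finset.mem_singleton_self B), Finset.mem_biUnion.2 ⟨n, Finset.mem_range.2 (by omega), h⟩⟩)
    filter_upwards [eventually_gt_atTop (a T)] with n hn
    rintro _ ⟨hx, t, rfl⟩ _ ⟨hy, t', rfl⟩
    rcases lt_trichotomy t t' with h | rfl | h
    · exact absurd hy (hlater n t t' hn h hx)
    · rfl
    · exact absurd hx (hlater n t' t hn h hy)

namespace MadStrongPPlus

/-- The blocks `B n ⊆ X n` determine the witness `f n = max (B n) + 1` for `X`; `G` records the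
almost disjoint family at the time the commitment is made. -/
structure Commitment where
  X : ℕ → Set ℕ
  B : ℕ → Finset ℕ
  G : Set (Set ℕ)

structure Commitment.IsValid (c : Commitment) (𝒜 : Set (Set ℕ)) : Prop where
  subset : ∀ n, ↑(c.B n) ⊆ c.X n ∩ Ici n
  G_subset : c.G ⊆ 𝒜
  spread : ∀ s : Finset (Set ℕ), ↑s ⊆ c.G → ∀ k, ∀ᶠ n in atTop,
    ∃ T ⊆ c.B n, k ≤ #T ∧ ∀ x ∈ T, ∀ A ∈ s, x ∉ A
  thin : ∀ A ∈ 𝒜, A ∉ c.G → ∀ᶠ n in atTop, (↑(c.B n) ∩ A).Subsingleton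

theorem Commitment.IsValid.of_subset {c : Commitment} {𝒜 𝒜' : Set (Set ℕ)} (hc : c.IsValid 𝒜)
    (h𝒜 : 𝒜 ⊆ 𝒜') (hthin : ∀ A ∈ 𝒜', A ∉ c.G → ∀ᶠ n in atTop, (↑(c.B n) ∩ A).Subsingleton) :
    c.IsValid 𝒜' :=
  ⟨hc.subset, hc.G_subset.trans h𝒜, hc.spread, hthin⟩

theorem Commitment.IsValid.eventually_inter_nonempty {c : Commitment} {𝒜 : Set (Set ℕ)}
    (hc : c.IsValid 𝒜) {Y : Set ℕ} (hY : Y ∈ madFilter 𝒜) :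
    ∀ᶠ n in atTop, (Y ∩ c.X n ∩ Iio ((c.B n).sup id + 1)).Nonempty := by
  classical
  obtain ⟨s, hs, hfin⟩ := mem_madFilter_iff.1 hY
  obtain ⟨m, hm⟩ := hfin.bddAbove
  have hmemY : ∀ x, m < x → (∀ A ∈ s, x ∉ A) → x ∈ Y := fun x hmx hxs => by
    by_contra hxY
    exact hmx.not_ge (hm ⟨hxY, by simpa using hxs⟩)
  set s₀ := s.filter (· ∈ c.G)
  set s₁ := s.filter (· ∉ c.G)
  have hthin : ∀ᶠ n in atTop, ∀ A ∈ s₁, (↑(c.B n) ∩ A).Subsingleton :=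
    (eventually_all_finset s₁).2 fun A hA =>
      hc.thin A (hs (Finset.mem_filter.1 hA).1) (Finset.mem_filter.1 hA).2
  -- each member of `s₁` removes at most one point of a block, so of `#s₁ + 1` points avoiding `s₀`
  -- one avoids all of `s`
  filter_upwards [eventually_gt_atTop m, hthin,
    hc.spread s₀ (fun A hA => (Finset.mem_filter.1 hA).2) (#s₁ + 1)]
    with n hmn hthin ⟨T, hTB, hT, hTs₀⟩
  obtain ⟨x, hxT, hxs₁⟩ := Finset.exists_forall_notMem_of_card_lt
    (fun A hA => (hthin A hA).anti (inter_subset_inter_left A (Finset.coe_subset.2 hTB))) hT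
  have hx := hc.subset n (hTB hxT)
  refine ⟨x, ⟨hmemY x (hmn.trans_le hx.2) fun A hA => ?_, hx.1⟩,
    Nat.lt_succ_of_le (Finset.le_sup (f := id) (hTB hxT))⟩
  by_cases hAG : A ∈ c.G
  · exact hTs₀ x hxT A (Finset.mem_filter.2 ⟨hA, hAG⟩)
  · exact hxs₁ A (Finset.mem_filter.2 ⟨hA, hAG⟩)

theorem strongPPlusFilter_madFilter {𝒜 : Set (Set ℕ)}
    (h𝒜 : ∀ X : ℕ → Set ℕ, (∀ n, X n ∉ madIdeal 𝒜) → ∃ c : Commitment, c.X = X ∧ c.IsValid 𝒜) :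
    StrongPPlusFilter (madFilter 𝒜) := by
  intro X hX
  obtain ⟨c, rfl, hc⟩ := h𝒜 X fun n => mem_fplus_madFilter_iff.1 (hX n)
  exact ⟨fun n => (c.B n).sup id + 1, fun Y hY => hc.eventually_inter_nonempty hY⟩

theorem exists_isValid_commitment {𝒜 : Set (Set ℕ)} (h𝒜 : 𝒜.Countable) {X : ℕ → Set ℕ}
    (hX : ∀ n, X n ∉ madIdeal 𝒜) : ∃ B, (⟨X, B, 𝒜⟩ : Commitment).IsValid 𝒜 := by
  obtain ⟨F, hF𝒜, hF⟩ := h𝒜.exists_finset_eventually_subset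
  have hinf (n : ℕ) : ((X n \ ⋃ A ∈ F n, A) \ Iio n).Infinite :=
    (Set.not_finite.1 fun h => hX n ⟨F n, hF𝒜 n, h⟩).sdiff (finite_Iio n)
  choose B hB hBcard using fun n => (hinf n).exists_subset_card_eq n
  refine ⟨B, fun n x hx => ⟨(hB n hx).1.1, mem_Ici.2 (not_lt.1 (hB n hx).2)⟩, subset_rfl,
    fun s hs k => ?_, fun A hA hAG => absurd hA hAG⟩
  filter_upwards [hF s hs, eventually_ge_atTop k] with n hsF hkn
  refine ⟨B n, subset_rfl, (hBcard n).symm ▸ hkn, fun x hx A hA hxA => (hB n hx).1.2 ?_⟩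
  exact mem_iUnion₂.2 ⟨A, hsF hA, hxA⟩

def baseFamily : Set (Set ℕ) := range fun k => range (Nat.pair k)

theorem baseFamily_infinite : baseFamily.Infinite :=
  infinite_range_of_injective fun k l h => by
    obtain ⟨m, hm⟩ : Nat.pair k 0 ∈ range (Nat.pair l) := h ▸ mem_range_self 0
    exact ((Nat.pair_eq_pair.1 hm).1).symm

theorem infinite_of_mem_baseFamily {A : Set ℕ} (hA : A ∈ baseFamily) : A.Infinite := by
  obtain ⟨k, rfl⟩ := hA
  exact infinite_range_of_injective fun m m' h => (Nat.pair_eq_pair.1 h).2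

theorem baseFamily_pairwise_inter_finite : baseFamily.Pairwise fun A B => (A ∩ B).Finite := by
  rintro _ ⟨k, rfl⟩ _ ⟨l, rfl⟩ hkl
  convert finite_empty
  refine eq_empty_of_forall_notMem fun x ⟨⟨m, hm⟩, ⟨m', hm'⟩⟩ => hkl ?_
  rw [(Nat.pair_eq_pair.1 (hm.trans hm'.symm)).1]

/-- `S.1` is the almost disjoint family built so far, `S.2` the commitments made so far. -/
abbrev Stage := Set (Set ℕ) × Set Commitment

structure Stage.IsValid (S : Stage) : Prop where
  baseFamily_subset : baseFamily ⊆ S.1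
  infinite : ∀ A ∈ S.1, A.Infinite
  pairwise_inter_finite : S.1.Pairwise fun A B => (A ∩ B).Finite
  commitments : ∀ c ∈ S.2, c.IsValid S.1

def Stage.init : Stage := (baseFamily, ∅)

theorem Stage.IsValid.adFamily {S : Stage} (hS : S.IsValid) : ADFamily S.1 :=
  ⟨baseFamily_infinite.mono hS.baseFamily_subset, hS.infinite, hS.pairwise_inter_finite⟩

theorem Stage.isValid_sSup {s : Set Stage} (hs : IsChain (· ≤ ·) s) (hne : s.Nonempty)
    (h : ∀ S ∈ s, S.IsValid) : (sSup s).IsValid := by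
  have hfst (A : Set ℕ) : A ∈ (sSup s).1 ↔ ∃ S ∈ s, A ∈ S.1 := by simp [Prod.fst_sSup]
  have hsnd (c : Commitment) : c ∈ (sSup s).2 ↔ ∃ S ∈ s, c ∈ S.2 := by simp [Prod.snd_sSup]
  have hdir := hs.directedOn
  obtain ⟨S₀, hS₀⟩ := hne
  refine ⟨(h S₀ hS₀).baseFamily_subset.trans (le_sSup hS₀).1, fun A hA => ?_,
    fun A hA B hB hAB => ?_, fun c hc => ?_⟩
  · obtain ⟨S, hS, hAS⟩ := (hfst A).1 hA
    exact (h S hS).infinite A hAS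
  · obtain ⟨S, hS, hAS⟩ := (hfst A).1 hA
    obtain ⟨S', hS', hBS'⟩ := (hfst B).1 hB
    obtain ⟨S'', hS'', hSS'', hS'S''⟩ := hdir S hS S' hS'
    exact (h S'' hS'').pairwise_inter_finite (hSS''.1 hAS) (hS'S''.1 hBS') hAB
  · obtain ⟨S, hS, hcS⟩ := (hsnd c).1 hc
    refine ((h S hS).commitments c hcS).of_subset (le_sSup hS).1 fun A hA hAG => ?_
    obtain ⟨S', hS', hAS'⟩ := (hfst A).1 hA
    obtain ⟨S'', hS'', hSS'', hS'S''⟩ := hdir S hS S' hS'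
    exact ((h S'' hS'').commitments c (hSS''.2 hcS)).thin A (hS'S''.1 hAS') hAG

theorem Stage.isValid_init_sup_sSup {s : Set Stage} (hs : IsChain (· ≤ ·) s)
    (h : ∀ S ∈ s, S.IsValid) : (init ⊔ sSup s).IsValid := by
  have hinit : init.IsValid :=
    ⟨subset_rfl, fun _ => infinite_of_mem_baseFamily, baseFamily_pairwise_inter_finite,
      fun _ hc => hc.elim⟩
  rw [← sSup_insert]
  refine isValid_sSup (hs.insert fun S hS _ => Or.inl ⟨(h S hS).baseFamily_subset,
    empty_subset _⟩) (insert_nonempty _ _) (forall_mem_insert.2 ⟨hinit, h⟩)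

def Stage.IsAdmissible (S : Stage) : Prop := S.IsValid ∧ S.1.Countable ∧ S.2.Countable

theorem Stage.isAdmissible_init_sup_sSup {s : Set Stage} (hsc : s.Countable)
    (hs : IsChain (· ≤ ·) s) (h : ∀ S ∈ s, S.IsAdmissible) : (init ⊔ sSup s).IsAdmissible := by
  refine ⟨isValid_init_sup_sSup hs fun S hS => (h S hS).1, ?_, ?_⟩
  · simp only [Prod.fst_sup, Prod.fst_sSup, sSup_eq_sUnion]
    exact (countable_range _).union
      ((hsc.image _).sUnion (forall_mem_image.2 fun S hS => (h S hS).2.1))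
  · simp only [Prod.snd_sup, Prod.snd_sSup, sSup_eq_sUnion]
    exact countable_empty.union
      ((hsc.image _).sUnion (forall_mem_image.2 fun S hS => (h S hS).2.2))

theorem Stage.exists_le_inter_infinite {S : Stage} (hS : S.IsAdmissible) (Z : Set ℕ) :
    ∃ S', S ≤ S' ∧ S'.IsAdmissible ∧ (Z.Infinite → ∃ A ∈ S'.1, (Z ∩ A).Infinite) := by
  obtain ⟨hSv, h𝒜, hC⟩ := hS
  by_cases hZ : Z ∈ madIdeal S.1
  · exact ⟨S, le_rfl, ⟨hSv, h𝒜, hC⟩, exists_inter_infinite_of_mem_madIdeal hZ⟩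
  obtain ⟨A, hAZ, hA, hA𝒜, hAB⟩ := exists_infinite_subset_almostDisjoint h𝒜 hZ
    (hC.image Commitment.B)
    (forall_mem_image.2 fun c hc n x hx => ((hSv.commitments c hc).subset n hx).2)
  have hv : Stage.IsValid (insert A S.1, S.2) := by
    refine ⟨hSv.baseFamily_subset.trans (subset_insert _ _),
      forall_mem_insert.2 ⟨hA, hSv.infinite⟩, ?_, fun c hc => ?_⟩
    · exact pairwise_insert.2 ⟨hSv.pairwise_inter_finite,
        fun B hB _ => ⟨hA𝒜 B hB, inter_comm A B ▸ hA𝒜 B hB⟩⟩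
    · refine (hSv.commitments c hc).of_subset (subset_insert _ _) fun B hB hBG => ?_
      rcases hB with rfl | hB
      · exact hAB c.B (mem_image_of_mem _ hc)
      · exact (hSv.commitments c hc).thin B hB hBG
  exact ⟨(insert A S.1, S.2), ⟨subset_insert _ _, subset_rfl⟩, ⟨hv, h𝒜.insert A, hC⟩,
    fun _ => ⟨A, mem_insert _ _, by rwa [inter_eq_self_of_subset_right hAZ]⟩⟩

theorem Stage.exists_le_commitment {S : Stage} (hS : S.IsAdmissible) (X : ℕ → Set ℕ) :
    ∃ S', S ≤ S' ∧ S'.IsAdmissible ∧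
      ((∀ n, X n ∉ madIdeal S'.1) → ∃ c ∈ S'.2, c.X = X) := by
  obtain ⟨hSv, h𝒜, hC⟩ := hS
  by_cases hX : ∀ n, X n ∉ madIdeal S.1
  · obtain ⟨B, hB⟩ := exists_isValid_commitment h𝒜 hX
    refine ⟨(S.1, insert ⟨X, B, S.1⟩ S.2), ⟨subset_rfl, subset_insert _ _⟩,
      ⟨⟨hSv.baseFamily_subset, hSv.infinite, hSv.pairwise_inter_finite,
        forall_mem_insert.2 ⟨hB, hSv.commitments⟩⟩, h𝒜, hC.insert _⟩,
      fun _ => ⟨_, mem_insert _ _, rfl⟩⟩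
  · exact ⟨S, le_rfl, ⟨hSv, h𝒜, hC⟩, fun h => absurd h hX⟩

def Stage.Handles (S : Stage) (Z : Set ℕ) (X : ℕ → Set ℕ) : Prop :=
  (Z.Infinite → ∃ A ∈ S.1, (Z ∩ A).Infinite) ∧ ((∀ n, X n ∉ madIdeal S.1) → ∃ c ∈ S.2, c.X = X)

theorem Stage.exists_le_handles {S : Stage} (hS : S.IsAdmissible) (Z : Set ℕ)
    (X : ℕ → Set ℕ) : ∃ S', S ≤ S' ∧ S'.IsAdmissible ∧ S'.Handles Z X := by
  obtain ⟨S₁, hSS₁, hS₁, hZ⟩ := exists_le_inter_infinite hS Z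
  obtain ⟨S₂, hS₁S₂, hS₂, hX⟩ := exists_le_commitment hS₁ X
  exact ⟨S₂, hSS₁.trans hS₁S₂, hS₂, fun h => (hZ h).imp fun A hA => ⟨hS₁S₂.1 hA.1, hA.2⟩, hX⟩

end MadStrongPPlus

open MadStrongPPlus

/-- (CH) There is a mad family `𝒜` on `ω` such that `F(𝒜)` is a strong P⁺-filter. -/
theorem stmt18 (hCH : Cardinal.continuum = Cardinal.aleph 1) :
    ∃ 𝒜 : Set (Set ℕ), MadFamily 𝒜 ∧ StrongPPlusFilter (madFilter 𝒜) := by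
  have hCH₀ : Cardinal.continuum.{0} = Cardinal.aleph 1 :=
    Cardinal.lift_injective (by simpa using hCH)
  obtain ⟨eZ⟩ := nonempty_omega_one_toType_equiv (α := Set ℕ) (by simp [← hCH₀])
  obtain ⟨eX⟩ := nonempty_omega_one_toType_equiv (α := ℕ → Set ℕ) (by simp [← hCH₀])
  obtain ⟨c, hc, hcS, hcQ⟩ := exists_isChain_forall_of_countable_Iio
    countable_Iio_omega_one_toType Stage.IsAdmissible (fun i S => S.Handles (eZ i) (eX i))
    Stage.init (fun _ => Stage.isAdmissible_init_sup_sSup) fun i _ hS =>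
      Stage.exists_le_handles hS (eZ i) (eX i)
  have hle (S : Stage) (hS : S ∈ c) : S ≤ Stage.init ⊔ sSup c := le_sup_of_le_right (le_sSup hS)
  have hvalid := Stage.isValid_init_sup_sSup hc fun S hS => (hcS S hS).1
  refine ⟨(Stage.init ⊔ sSup c).1, ⟨hvalid.adFamily, fun Z hZ => ?_⟩,
    strongPPlusFilter_madFilter fun X hX => ?_⟩
  · obtain ⟨S, hSc, hSZ, -⟩ := hcQ (eZ.symm Z)
    simp only [Equiv.apply_symm_apply] at hSZ
    obtain ⟨A, hA, hZA⟩ := hSZ hZ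
    exact ⟨A, (hle S hSc).1 hA, hZA⟩
  · obtain ⟨S, hSc, -, hSX⟩ := hcQ (eX.symm X)
    simp only [Equiv.apply_symm_apply] at hSX
    obtain ⟨d, hd, rfl⟩ := hSX fun n hn => hX n (madIdeal_mono (hle S hSc).1 hn)
    exact ⟨d, rfl, hvalid.commitments d ((hle S hSc).2 hd)⟩
end
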